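/- arXiv:1801.08685 — 8 statements merged into one kernel-verified Lean document; each statement's English description precedes it below -/
import Mathlib

section
/- There is no assignment of 12 distinct real numbers x_1, ..., x_12 to the edges of a cube such that each of the six faces admits a cyclic rotation of its boundary edge labels (taken in the orientation induced by the outward normal) that is strictly increasing. Concretely, with faces given by the cyclic label sequences F1 = (x_1,x_2,x_3,x_4), F2 = (x_5,x_6,x_7,x_2), F3 = (x_11,x_10,x_8,x_6), F4 = (x_12,x_4,x_9,x_10), F5 = (x_3,x_7,x_8,x_9), F6 = (x_1,x_12,x_11,x_5), there is no choice of distinct reals such that every F_i has some cyclic rotation that is strictly increasing. -/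
/-- A cyclic quadruple of reals admits a coherent (strictly) increasing rotation. -/
def Coh4 (a b c d : ℝ) : Prop :=
  (a < b ∧ b < c ∧ c < d) ∨ (b < c ∧ c < d ∧ d < a) ∨
  (c < d ∧ d < a ∧ a < b) ∨ (d < a ∧ a < b ∧ b < c)

set_option maxHeartbeats 4000000 in
/-- There is no coherent labelling of the edges of a cube (or cuboid). -/
theorem cube_no_coherent_labelling :
    ¬ ∃ x1 x2 x3 x4 x5 x6 x7 x8 x9 x10 x11 x12 : ℝ,
      ([x1, x2, x3, x4, x5, x6, x7, x8, x9, x10, x11, x12].Pairwise (· ≠ ·)) ∧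
      Coh4 x1 x2 x3 x4 ∧ Coh4 x5 x6 x7 x2 ∧ Coh4 x11 x10 x8 x6 ∧
      Coh4 x12 x4 x9 x10 ∧ Coh4 x3 x7 x8 x9 ∧ Coh4 x1 x12 x11 x5 := by
  rintro ⟨x1,x2,x3,x4,x5,x6,x7,x8,x9,x10,x11,x12,_,h1,h2,h3,h4,h5,h6⟩
  rcases h1 with ⟨a,b,c⟩|⟨a,b,c⟩|⟨a,b,c⟩|⟨a,b,c⟩ <;>
  rcases h2 with ⟨d,e,f⟩|⟨d,e,f⟩|⟨d,e,f⟩|⟨d,e,f⟩ <;>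
  rcases h3 with ⟨g,i,j⟩|⟨g,i,j⟩|⟨g,i,j⟩|⟨g,i,j⟩ <;>
  rcases h4 with ⟨k,l,m⟩|⟨k,l,m⟩|⟨k,l,m⟩|⟨k,l,m⟩ <;>
  rcases h5 with ⟨n,o,p⟩|⟨n,o,p⟩|⟨n,o,p⟩|⟨n,o,p⟩ <;>
  rcases h6 with ⟨q,r,s⟩|⟨q,r,s⟩|⟨q,r,s⟩|⟨q,r,s⟩ <;>
  linarith
end

section
/- Let a_1, ..., a_n (n >= 3) be distinct real numbers arranged cyclically with a_1 the minimum. Then there exist real numbers b_1, ..., b_n, all distinct from each other and from the a_i, such that for every i (indices mod n) the cyclic triple (b_{i-1}, a_i, b_i) admits a coherent increasing rotation, i.e., b_{i-1} < a_i < b_i or a_i < b_i < b_{i-1} or b_i < b_{i-1} < a_i. (This is the key lemma showing any face of an arbitrarily labelled polyhedron can have a pyramid attached with a coherent labelling of the new triangular faces.) -/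
/-- A cyclic triple of reals admits a coherent (strictly) increasing rotation. -/
def Coh3 (a b c : ℝ) : Prop :=
  (a < b ∧ b < c) ∨ (b < c ∧ c < a) ∨ (c < a ∧ a < b)

/-- Key pyramid-attachment lemma: given distinct reals `a 0, …, a (n-1)` arranged
cyclically with `a 0` the minimum, there are reals `b i`, all distinct from each other
and from the `a i`, so that each cyclic triple `(b (i-1), a i, b i)`, i.e.
`(b i, a (i+1), b (i+1))`, is coherent. -/
theorem pyramid_attachment_labels (n : ℕ) (hn : 3 ≤ n) (a : Fin n → ℝ)
    (ha : Function.Injective a) (hmin : ∀ i, a ⟨0, by omega⟩ ≤ a i) :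
    ∃ b : Fin n → ℝ,
      Function.Injective b ∧
      (∀ i j, b i ≠ a j) ∧
      ∀ i : Fin n, Coh3 (b i) (a (finRotate n i)) (b (finRotate n i)) := by
  classical
  obtain ⟨m, rfl⟩ : ∃ m, n = m + 1 := ⟨n - 1, by omega⟩
  set σ : Fin (m+1) → Fin (m+1) := ⇑(finRotate (m+1)) with hσdef
  have hσinj : Function.Injective σ := (finRotate (m+1)).injective
  have hfix : ∀ i : Fin (m+1), σ i ≠ i := by
    intro i h
    have h' : (i : Fin (m+1)) + 1 = i + 0 := by
      rw [add_zero, ← finRotate_succ_apply, ← hσdef, h]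
    have h1 : (1 : Fin (m+1)) = 0 := add_left_cancel h'
    have := Fin.one_eq_zero_iff.mp h1
    omega
  set T : Finset ℝ := Finset.image (fun p : Fin (m+1) × Fin (m+1) => |a p.1 - a p.2|)
      (Finset.univ.filter fun p => p.1 ≠ p.2) with hT
  have hTne : T.Nonempty := by
    refine ⟨|a ⟨0, by omega⟩ - a ⟨1, by omega⟩|, ?_⟩
    rw [hT, Finset.mem_image]
    exact ⟨(⟨0, by omega⟩, ⟨1, by omega⟩), by simp [Fin.ext_iff], rfl⟩
  set δ := T.min' hTne with hδ
  have hδle : ∀ i j : Fin (m+1), i ≠ j → δ ≤ |a i - a j| := by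
    intro i j h
    apply Finset.min'_le
    rw [hT, Finset.mem_image]
    exact ⟨(i, j), by simp [h], rfl⟩
  have hδpos : 0 < δ := by
    obtain ⟨p, hp, hpe⟩ := Finset.mem_image.mp (T.min'_mem hTne)
    simp only [Finset.mem_filter] at hp
    have : (0:ℝ) < |a p.1 - a p.2| := abs_sub_pos.mpr (fun h => hp.2 (ha h))
    rw [hpe] at this
    exact this
  refine ⟨fun i => a (σ i) - δ/2, ?_, ?_, ?_⟩
  · intro i j h
    simp only [] at h
    have : a (σ i) = a (σ j) := by linarith
    exact hσinj (ha this)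
  · intro i j h
    simp only [] at h
    rcases eq_or_ne (σ i) j with he | he
    · rw [he] at h; linarith [hδpos]
    · have := hδle _ _ he
      have habs : |a (σ i) - a j| = δ/2 := by rw [sub_eq_iff_eq_add.mp h]; simp [abs_of_pos, hδpos, half_pos hδpos]
      rw [habs] at this; linarith
  · intro i
    show Coh3 (a (σ i) - δ/2) (a (σ i)) (a (σ (σ i)) - δ/2)
    set x := a (σ i) with hx
    set y := a (σ (σ i)) with hy
    have hne : σ i ≠ σ (σ i) := fun h => hfix _ (hσinj h).symm
    have hxy : x ≠ y := fun h => hne (ha h)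
    have hd := hδle _ _ hne
    rcases lt_or_gt_of_ne hxy with hlt | hgt
    · have : δ ≤ y - x := by rw [abs_of_neg (by linarith : x - y < 0)] at hd; linarith
      exact Or.inl ⟨by linarith, by linarith⟩
    · exact Or.inr (Or.inr ⟨by linarith, by linarith⟩)
end

section
/- Suppose a polyhedron has a coherent labelling by distinct reals, and one of its faces is a triangle whose edges, in outward-normal cyclic order, carry labels a < b < c. Then one can attach a tetrahedron along this face (removing the face, keeping all three edges, and adding three new edges labelled d, e, f and three new triangular faces with outward-normal cyclic label sequences (f,e,b), (a,e,d), (f,c,d)) and choose distinct real values d, e, f, different from all existing labels, so that the resulting labelling is coherent. In particular, it suffices to choose f, e, d with f < a < e < b < c < d. -/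
/-- One-face tetrahedron attachment with no edge vanishing: given a triangular face
with labels `a < b < c` among the existing labels `S`, one can choose new distinct
labels `d, e, f` outside `S` with `f < a < e < b < c < d`, making the three new
triangular faces `(f,e,b)`, `(a,e,d)`, `(f,c,d)` coherent. -/
theorem tetrahedron_one_face_attachment (S : Finset ℝ) (a b c : ℝ)
    (haS : a ∈ S) (hbS : b ∈ S) (hcS : c ∈ S) (hab : a < b) (hbc : b < c) :
    ∃ d e f : ℝ, d ∉ (S : Set ℝ) ∧ e ∉ (S : Set ℝ) ∧ f ∉ (S : Set ℝ) ∧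
      d ≠ e ∧ d ≠ f ∧ e ≠ f ∧
      f < a ∧ a < e ∧ e < b ∧ c < d ∧
      Coh3 f e b ∧ Coh3 a e d ∧ Coh3 f c d := by
  have hne : S.Nonempty := ⟨a, haS⟩
  set d := S.max' hne + 1 with hd
  set f := S.min' hne - 1 with hf
  have hdS : d ∉ (S : Set ℝ) := by
    intro h
    have := S.le_max' d h
    linarith
  have hfS : f ∉ (S : Set ℝ) := by
    intro h
    have := S.min'_le f h
    linarith
  have hcd : c < d := by
    have := S.le_max' c hcS
    linarith
  have hfa : f < a := by
    have := S.min'_le a haS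
    linarith
  obtain ⟨e, heI, heS⟩ : ∃ e ∈ Set.Ioo a b, e ∉ (S : Set ℝ) := by
    have hinf : (Set.Ioo a b).Infinite := Set.Ioo_infinite hab
    obtain ⟨e, he⟩ := (hinf.diff S.finite_toSet).nonempty
    exact ⟨e, he.1, he.2⟩
  obtain ⟨hae, heb⟩ := heI
  refine ⟨d, e, f, hdS, heS, hfS, ?_, ?_, ?_, hfa, hae, heb, hcd, ?_, ?_, ?_⟩
  · intro h; linarith
  · intro h; linarith
  · intro h; linarith
  · exact Or.inl ⟨by linarith, heb⟩
  · exact Or.inl ⟨hae, by linarith⟩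
  · exact Or.inl ⟨by linarith, hcd⟩
end

section
/- Let a, b, c, d, e be distinct real numbers such that each of the cyclic triples (a,b,c) and (d,e,b) admits a coherent increasing rotation. Then in each of the four cases (c < e and a < d), (c < e and d < a), (e < c and a < d), (e < c and d < a), there exists a real number f, distinct from a, b, c, d, e, such that both cyclic triples (a,d,f) and (f,e,c) admit coherent increasing rotations. -/
lemma between_ne (L U b : ℝ) (h : L < U) : ∃ f, L < f ∧ f < U ∧ f ≠ b := by
  by_cases hb : L < b ∧ b < U
  · exact ⟨(L + b) / 2, by linarith [hb.1], by linarith [hb.1, hb.2],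
      by intro h'; linarith [hb.1, h'.symm ▸ (by linarith [hb.1] : (L + b) / 2 < b)]⟩
  · refine ⟨(L + U) / 2, by linarith, by linarith, fun h' => hb ⟨by linarith [h' ▸ (by linarith : L < (L + U) / 2)], by linarith [h' ▸ (by linarith : (L + U) / 2 < U)]⟩⟩

/-- Two-face tetrahedron attachment, all four cases: whenever the faces `(a,b,c)` and
`(d,e,b)` are coherent (so in each of the cases `c<e,a<d`; `c<e,d<a`; `e<c,a<d`;
`e<c,d<a`), there is a label `f` for the edge opposite the vanishing common edge `b`
making the two new faces `(a,d,f)` and `(f,e,c)` coherent. -/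
theorem two_face_attachment_all_cases (a b c d e : ℝ)
    (hdist : [a, b, c, d, e].Pairwise (· ≠ ·))
    (h1 : Coh3 a b c) (h2 : Coh3 d e b) :
    ∃ f : ℝ, f ≠ a ∧ f ≠ b ∧ f ≠ c ∧ f ≠ d ∧ f ≠ e ∧
      Coh3 a d f ∧ Coh3 f e c := by
  simp only [List.pairwise_cons, List.mem_cons, List.mem_singleton, List.not_mem_nil] at hdist
  obtain ⟨hA, hB, hC, hD, -⟩ := hdist
  have hab : a ≠ b := hA b (by simp)
  have hac : a ≠ c := hA c (by simp)
  have had : a ≠ d := hA d (by simp)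
  have hae : a ≠ e := hA e (by simp)
  have hbc : b ≠ c := hB c (by simp)
  have hbd : b ≠ d := hB d (by simp)
  have hbe : b ≠ e := hB e (by simp)
  have hcd : c ≠ d := hC d (by simp)
  have hce : c ≠ e := hC e (by simp)
  have hde : d ≠ e := hD e (by simp)
  rcases had.lt_or_gt with had' | had' <;> rcases hce.lt_or_gt with hce' | hce'
  · -- a < d, c < e : need c<a ∨ d<e
    have key : c < a ∨ d < e := by
      by_contra hk
      push_neg at hk
      have h1' : a < c := lt_of_le_of_ne hk.1 hac
      have h2' : e < d := lt_of_le_of_ne hk.2 hde.symm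
      rcases h1 with ⟨u, v⟩ | ⟨u, v⟩ | ⟨u, v⟩ <;>
        rcases h2 with ⟨s, t⟩ | ⟨s, t⟩ | ⟨s, t⟩ <;> linarith
    rcases key with key | key
    · -- f ∈ (c, min a e)
      obtain ⟨f, hf1, hf2, hfb⟩ := between_ne c (min a e) b (by
        rcases min_cases a e with ⟨h', -⟩ | ⟨h', -⟩ <;> simp [h'] <;> linarith)
      have hfa : f < a := lt_of_lt_of_le hf2 (min_le_left _ _)
      have hfe : f < e := lt_of_lt_of_le hf2 (min_le_right _ _)
      exact ⟨f, hfa.ne, hfb, hf1.ne', by linarith, hfe.ne,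
        Or.inr (Or.inr ⟨hfa, had'⟩), Or.inr (Or.inr ⟨hf1, hfe⟩)⟩
    · -- f ∈ (max c d, e)
      obtain ⟨f, hf1, hf2, hfb⟩ := between_ne (max c d) e b (by
        rcases max_cases c d with ⟨h', -⟩ | ⟨h', -⟩ <;> simp [h'] <;> linarith)
      have hfc : c < f := lt_of_le_of_lt (le_max_left _ _) hf1
      have hfd : d < f := lt_of_le_of_lt (le_max_right _ _) hf1
      exact ⟨f, by linarith, hfb, hfc.ne', hfd.ne', hf2.ne,
        Or.inl ⟨had', hfd⟩, Or.inr (Or.inr ⟨hfc, hf2⟩)⟩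
  · -- a < d, e < c : f below everything
    set f := min (min a b) (min (min c d) e) - 1 with hf
    have h1' : f < a := by linarith [((min_le_left (min a b) (min (min c d) e)).trans (min_le_left a b))]
    have h2' : f < b := by linarith [((min_le_left (min a b) (min (min c d) e)).trans (min_le_right a b))]
    have h3' : f < c := by linarith [((min_le_right (min a b) (min (min c d) e)).trans ((min_le_left (min c d) e).trans (min_le_left c d)))]
    have h4' : f < d := by linarith [((min_le_right (min a b) (min (min c d) e)).trans ((min_le_left (min c d) e).trans (min_le_right c d)))]
    have h5' : f < e := by linarith [((min_le_right (min a b) (min (min c d) e)).trans (min_le_right (min c d) e))]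
    exact ⟨f, h1'.ne, h2'.ne, h3'.ne, h4'.ne, h5'.ne,
      Or.inr (Or.inr ⟨h1', had'⟩), Or.inl ⟨h5', hce'⟩⟩
  · -- d < a, c < e : both c < a and d < e
    have key1 : c < a := by
      rcases (lt_or_gt_of_ne hac) with h' | h'
      · exfalso
        rcases h1 with ⟨u, v⟩ | ⟨u, v⟩ | ⟨u, v⟩ <;>
          rcases h2 with ⟨s, t⟩ | ⟨s, t⟩ | ⟨s, t⟩ <;> linarith
      · exact h'
    have key2 : d < e := by
      rcases (lt_or_gt_of_ne hde) with h' | h'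
      · exact h'
      · exfalso
        rcases h1 with ⟨u, v⟩ | ⟨u, v⟩ | ⟨u, v⟩ <;>
          rcases h2 with ⟨s, t⟩ | ⟨s, t⟩ | ⟨s, t⟩ <;> linarith
    obtain ⟨f, hf1, hf2, hfb⟩ := between_ne (max c d) (min a e) b (by
      rcases max_cases c d with ⟨h', -⟩ | ⟨h', -⟩ <;>
        rcases min_cases a e with ⟨h'', -⟩ | ⟨h'', -⟩ <;> simp [h', h''] <;> linarith)
    have hfc : c < f := lt_of_le_of_lt (le_max_left _ _) hf1
    have hfd : d < f := lt_of_le_of_lt (le_max_right _ _) hf1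
    have hfa : f < a := lt_of_lt_of_le hf2 (min_le_left _ _)
    have hfe : f < e := lt_of_lt_of_le hf2 (min_le_right _ _)
    exact ⟨f, hfa.ne, hfb, hfc.ne', hfd.ne', hfe.ne,
      Or.inr (Or.inl ⟨hfd, hfa⟩), Or.inr (Or.inr ⟨hfc, hfe⟩)⟩
  · -- d < a, e < c : need c<a ∨ d<e
    have key : c < a ∨ d < e := by
      by_contra hk
      push_neg at hk
      have h1' : a < c := lt_of_le_of_ne hk.1 hac
      have h2' : e < d := lt_of_le_of_ne hk.2 hde.symm
      rcases h1 with ⟨u, v⟩ | ⟨u, v⟩ | ⟨u, v⟩ <;>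
        rcases h2 with ⟨s, t⟩ | ⟨s, t⟩ | ⟨s, t⟩ <;> linarith
    rcases key with key | key
    · -- f ∈ (max c d, a)
      obtain ⟨f, hf1, hf2, hfb⟩ := between_ne (max c d) a b (by
        rcases max_cases c d with ⟨h', -⟩ | ⟨h', -⟩ <;> simp [h'] <;> linarith)
      have hfc : c < f := lt_of_le_of_lt (le_max_left _ _) hf1
      have hfd : d < f := lt_of_le_of_lt (le_max_right _ _) hf1
      exact ⟨f, hf2.ne, hfb, hfc.ne', hfd.ne', by linarith,
        Or.inr (Or.inl ⟨hfd, hf2⟩), Or.inr (Or.inl ⟨hce', hfc⟩)⟩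
    · -- f ∈ (d, min a e)
      obtain ⟨f, hf1, hf2, hfb⟩ := between_ne d (min a e) b (by
        rcases min_cases a e with ⟨h', -⟩ | ⟨h', -⟩ <;> simp [h'] <;> linarith)
      have hfa : f < a := lt_of_lt_of_le hf2 (min_le_left _ _)
      have hfe : f < e := lt_of_lt_of_le hf2 (min_le_right _ _)
      exact ⟨f, hfa.ne, hfb, by linarith, hf1.ne', hfe.ne,
        Or.inr (Or.inl ⟨hf1, hfa⟩), Or.inl ⟨hfe, hce'⟩⟩
end

section
/- Suppose distinct reals x_1, x_2, x_3, x_4, x_5, x_6, x_7, x_8, x_9, x_10, x_11, x_12 satisfy: x_1 < x_2 < x_3 < x_4 (face F1 in increasing order), and the cyclic quadruple (x_5, x_6, x_7, x_2) admits the rotation with x_5 < x_6 < x_7 < x_2. Then the cyclic quadruple (x_3, x_7, x_8, x_9) admits a coherent increasing rotation only in the form x_7 < x_8 < x_9 < x_3, the cyclic quadruple (x_11, x_10, x_8, x_6) only in the form x_6 < x_11 < x_10 < x_8, the cyclic quadruple (x_1, x_12, x_11, x_5) only in the form x_5 < x_1 < x_12 < x_11, and then the cyclic quadruple (x_12, x_4,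 x_9, x_10) admits no coherent increasing rotation. Hence this case of a coherent cube labelling is impossible. -/
/-- Case (1) of the cube proof: with `x₁<x₂<x₃<x₄` and `x₅<x₆<x₇<x₂`, the faces
`F₅ = (x₃,x₇,x₈,x₉)`, `F₃ = (x₁₁,x₁₀,x₈,x₆)`, `F₆ = (x₁,x₁₂,x₁₁,x₅)` are coherent only
in the stated forms, and then `F₄ = (x₁₂,x₄,x₉,x₁₀)` admits no coherent rotation. -/
theorem cube_case_one (x1 x2 x3 x4 x5 x6 x7 x8 x9 x10 x11 x12 : ℝ)
    (hdist : [x1, x2, x3, x4, x5, x6, x7, x8, x9, x10, x11, x12].Pairwise (· ≠ ·))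
    (hF1 : x1 < x2 ∧ x2 < x3 ∧ x3 < x4)
    (hF2 : x5 < x6 ∧ x6 < x7 ∧ x7 < x2)
    (hF5 : Coh4 x3 x7 x8 x9) (hF3 : Coh4 x11 x10 x8 x6) (hF6 : Coh4 x1 x12 x11 x5) :
    (x7 < x8 ∧ x8 < x9 ∧ x9 < x3) ∧
    (x6 < x11 ∧ x11 < x10 ∧ x10 < x8) ∧
    (x5 < x1 ∧ x1 < x12 ∧ x12 < x11) ∧
    ¬ Coh4 x12 x4 x9 x10 := by
  obtain ⟨h12, h23, h34⟩ := hF1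
  obtain ⟨h56, h67, h72⟩ := hF2
  unfold Coh4 at hF5 hF3 hF6
  rcases hF5 with h5 | h5 | h5 | h5 <;> rcases hF3 with h3 | h3 | h3 | h3 <;>
    rcases hF6 with h6 | h6 | h6 | h6 <;>
    first
  | (refine ⟨?_, ?_, ?_, ?_⟩ <;> first
      | exact h5 | exact h3 | exact h6
      | (rintro (⟨a, b, c⟩ | ⟨a, b, c⟩ | ⟨a, b, c⟩ | ⟨a, b, c⟩) <;>
          obtain ⟨p5, q5, r5⟩ := h5 <;> obtain ⟨p3, q3, r3⟩ := h3 <;>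
          obtain ⟨p6, q6, r6⟩ := h6 <;> linarith))
  | (exfalso; obtain ⟨p5, q5, r5⟩ := h5; obtain ⟨p3, q3, r3⟩ := h3;
     obtain ⟨p6, q6, r6⟩ := h6; linarith)
end

section
/- Suppose distinct reals x_1, ..., x_12 satisfy x_1 < x_2 < x_3 < x_4 and the cyclic quadruple (x_5,x_6,x_7,x_2) admits the rotation x_6 < x_7 < x_2 < x_5, and suppose all six cube faces F1 = (x_1,x_2,x_3,x_4), F2 = (x_5,x_6,x_7,x_2), F3 = (x_11,x_10,x_8,x_6), F4 = (x_12,x_4,x_9,x_10), F5 = (x_3,x_7,x_8,x_9), F6 = (x_1,x_12,x_11,x_5) admit coherent increasing rotations. Then necessarily x_7 < x_8 < x_9 < x_3, x_6 < x_11 < x_10 < x_8, x_1 < x_12 < x_11 < x_5, and x_9 < x_10 < x_12 < x_4 hold, which forces the contradiction x_12 < x_11 < x_10 < x_12. Hence this case is impossible. -/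
/-- Case (2) of the cube proof: with `x₁<x₂<x₃<x₄` and `x₆<x₇<x₂<x₅`, all six faces of
the cube cannot simultaneously admit coherent increasing rotations. -/
theorem cube_case_two (x1 x2 x3 x4 x5 x6 x7 x8 x9 x10 x11 x12 : ℝ)
    (hdist : [x1, x2, x3, x4, x5, x6, x7, x8, x9, x10, x11, x12].Pairwise (· ≠ ·))
    (hF1 : x1 < x2 ∧ x2 < x3 ∧ x3 < x4)
    (hF2' : x6 < x7 ∧ x7 < x2 ∧ x2 < x5)
    (hF1c : Coh4 x1 x2 x3 x4) (hF2 : Coh4 x5 x6 x7 x2) (hF3 : Coh4 x11 x10 x8 x6)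
    (hF4 : Coh4 x12 x4 x9 x10) (hF5 : Coh4 x3 x7 x8 x9) (hF6 : Coh4 x1 x12 x11 x5) :
    False := by
  obtain ⟨h1,h2,h3⟩ := hF1
  obtain ⟨h4,h5,h6⟩ := hF2'
  unfold Coh4 at hF3 hF4 hF5 hF6
  rcases hF3 with (⟨_,_,_⟩|⟨_,_,_⟩|⟨_,_,_⟩|⟨_,_,_⟩) <;> rcases hF4 with (⟨_,_,_⟩|⟨_,_,_⟩|⟨_,_,_⟩|⟨_,_,_⟩) <;>
    rcases hF5 with (⟨_,_,_⟩|⟨_,_,_⟩|⟨_,_,_⟩|⟨_,_,_⟩) <;> rcases hF6 with (⟨_,_,_⟩|⟨_,_,_⟩|⟨_,_,_⟩|⟨_,_,_⟩) <;> linarith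
end

section
/- For every n >= 3, the bipyramid over an n-gon (the polyhedron with 2 apexes, n equatorial vertices, 3n edges, and 2n triangular faces) admits a coherent labelling: an injective assignment of real numbers to its 3n edges such that each of the 2n oriented triangular faces has a cyclic rotation of its three edge labels that is strictly increasing. -/
theorem coh3_natCast {a b c : ℕ} :
    Coh3 a b c ↔ a < b ∧ b < c ∨ b < c ∧ c < a ∨ c < a ∧ a < b := by
  simp only [Coh3, Nat.cast_lt]

def edgeLabel {n : ℕ} (k : Fin 3) (i : Fin n) : ℝ := (3 * i + k : ℕ)

theorem edgeLabel_injective2 {n : ℕ} : Function.Injective2 (edgeLabel (n := n)) := by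
  intro k l i j h
  rw [edgeLabel, edgeLabel, Nat.cast_inj] at h
  omega

theorem injective_sumElim_edgeLabel {n : ℕ} :
    Function.Injective (Sum.elim (edgeLabel 1) (Sum.elim (edgeLabel 0) (edgeLabel 2)) :
      Fin n ⊕ Fin n ⊕ Fin n → ℝ) := by
  rintro (i | i | i) (j | j | j) h <;>
    obtain ⟨hkl, rfl⟩ := edgeLabel_injective2 h <;> first | rfl | exact absurd hkl (by decide)

theorem coh3_edgeLabel_top {m : ℕ} (hm : 1 ≤ m) (i : Fin (m + 1)) :
    Coh3 (edgeLabel 0 i) (edgeLabel 1 i) (edgeLabel 0 (finRotate (m + 1) i)) := by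
  simp only [edgeLabel, coh3_natCast, coe_finRotate]
  split_ifs with h
  · subst h; simp only [Fin.val_last]; omega
  · omega

theorem coh3_edgeLabel_bottom {m : ℕ} (hm : 1 ≤ m) (i : Fin (m + 1)) :
    Coh3 (edgeLabel 2 (finRotate (m + 1) i)) (edgeLabel 1 i) (edgeLabel 2 i) := by
  simp only [edgeLabel, coh3_natCast, coe_finRotate]
  split_ifs with h
  · subst h; simp only [Fin.val_last]; omega
  · omega

/-- `e`, `t` and `b` label the equatorial, top and bottom edges; `finRotate n i` is `i + 1 mod n`. -/
theorem bipyramid_coherent_labelling (n : ℕ) (hn : 3 ≤ n) :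
    ∃ e t b : Fin n → ℝ,
      Function.Injective (Sum.elim e (Sum.elim t b)) ∧
      (∀ i : Fin n, Coh3 (t i) (e i) (t (finRotate n i))) ∧
      (∀ i : Fin n, Coh3 (b (finRotate n i)) (e i) (b i)) := by
  obtain ⟨m, rfl⟩ : ∃ m, n = m + 1 := ⟨n - 1, by omega⟩
  exact ⟨edgeLabel 1, edgeLabel 0, edgeLabel 2, injective_sumElim_edgeLabel,
    coh3_edgeLabel_top (by omega), coh3_edgeLabel_bottom (by omega)⟩
end

section
/- The octahedron (bipyramid over a square, with 12 edges and 8 triangular faces) admits a coherent labelling: there is an injective assignment of reals to its 12 edges such that each of the 8 outward-oriented triangular faces has a cyclic rotation of its edge labels that is strictly increasing. -/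
/-- The octahedron (the bipyramid over a square) admits a coherent labelling: with `e`
the equatorial edge labels, `t` the top edge labels and `b` the bottom edge labels (all
12 distinct), every top face `(t i, e i, t (i+1))` and every bottom face
`(b (i+1), e i, b i)` is coherent. -/
theorem octahedron_coherent_labelling :
    ∃ e t b : Fin 4 → ℝ,
      Function.Injective (Sum.elim e (Sum.elim t b)) ∧
      (∀ i : Fin 4, Coh3 (t i) (e i) (t (i + 1))) ∧
      (∀ i : Fin 4, Coh3 (b (i + 1)) (e i) (b i)) := by
  refine ⟨![15, 25, 35, 5], ![10, 20, 30, 40], ![0, 1, 2, 6], ?_, ?_, ?_⟩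
  · rintro (x | x | x) (y | y | y) h <;> fin_cases x <;> fin_cases y <;> simp_all
  · intro i
    fin_cases i <;> simp [Coh3] <;> norm_num
  · intro i
    fin_cases i <;> simp [Coh3] <;> norm_num
end
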